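/- The set of angles α ∈ 𝕋 that are weakly pre-periodic (for some period k ≥ 1) has Lebesgue (Haar) measure zero in 𝕋. -/

import Mathlib

open Set MeasureTheory Filter
open scoped Classical

noncomputable section

/-- The circle `ℝ/ℤ`. -/
abbrev 𝕋 := AddCircle (1 : ℝ)

/-- The doubling map `h(x) = 2x` on the circle. -/
def dbl (x : 𝕋) : 𝕋 := x + x

/-- The representative of a point of the circle lying in `[0,1)`. -/
def rep (x : 𝕋) : ℝ := (AddCircle.equivIco 1 0 x : ℝ)

/-- `⋆₁ = α/2`. -/
def star1 (α : 𝕋) : 𝕋 := ((rep α / 2 : ℝ) : 𝕋)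

/-- `⋆₂ = α/2 + 1/2`. -/
def star2 (α : 𝕋) : 𝕋 := ((rep α / 2 + 1 / 2 : ℝ) : 𝕋)

/-- The closed semicircle `C(L) = {α/2 + t : t ∈ [0,1/2]}`. -/
def arcL (α : 𝕋) : Set 𝕋 := (fun t : ℝ => ((rep α / 2 + t : ℝ) : 𝕋)) '' Set.Icc 0 (1 / 2)

/-- The closed semicircle `C(R) = {α/2 + 1/2 + t : t ∈ [0,1/2]}`. -/
def arcR (α : 𝕋) : Set 𝕋 :=
  (fun t : ℝ => ((rep α / 2 + 1 / 2 + t : ℝ) : 𝕋)) '' Set.Icc 0 (1 / 2)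

/-- The open semicircle `{α/2 + t : t ∈ (0,1/2)}`. -/
def openArcL (α : 𝕋) : Set 𝕋 := (fun t : ℝ => ((rep α / 2 + t : ℝ) : 𝕋)) '' Set.Ioo 0 (1 / 2)

/-- The open semicircle `{α/2 + 1/2 + t : t ∈ (0,1/2)}`. -/
def openArcR (α : 𝕋) : Set 𝕋 :=
  (fun t : ℝ => ((rep α / 2 + 1 / 2 + t : ℝ) : 𝕋)) '' Set.Ioo 0 (1 / 2)

/-- The alphabet `{L, R, ⋆}`. -/
inductive Letter | L | R | star
deriving DecidableEq

/-- `itin α x n` is the `(n+1)`-st letter of the itinerary `I^α(x)`. -/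
def itin (α x : 𝕋) (n : ℕ) : Letter :=
  if dbl^[n] x = star1 α ∨ dbl^[n] x = star2 α then Letter.star
  else if dbl^[n] x ∈ openArcL α then Letter.L else Letter.R

/-- The lamination `x ≈_α y`. -/
def approx (α : 𝕋) (x y : 𝕋) : Prop :=
  ∀ n : ℕ, itin α x n = itin α y n ∨ itin α x n = Letter.star ∨ itin α y n = Letter.star

/-- A point is periodic under the doubling map. -/
def IsPeriodicPt' (x : 𝕋) : Prop := ∃ k : ℕ, 1 ≤ k ∧ dbl^[k] x = x

/-- `α` is periodic under the doubling map. -/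
def Periodic' (α : 𝕋) : Prop := IsPeriodicPt' α

/-- `α` is pre-periodic under the doubling map. -/
def PrePeriodic (α : 𝕋) : Prop := ∃ m : ℕ, IsPeriodicPt' (dbl^[m] α)

/-- `D` is a gluing link with `n` arcs with respect to `≈_α`: a disjoint union of `n` closed
arcs whose `2n` endpoints occur in counterclockwise cyclic order and are consecutively glued
by `≈_α`. -/
def IsGluingLink (α : 𝕋) (n : ℕ) (D : Set 𝕋) : Prop :=
  0 < n ∧ ∃ s e : ℕ → ℝ,
    (∀ i < n, s i ≤ e i) ∧
    (∀ i j : ℕ, i < j → j < n → e i < s j) ∧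
    (∀ i < n, ∀ j < n, e j < s i + 1) ∧
    D = ⋃ i ∈ Finset.range n, (fun t : ℝ => (t : 𝕋)) '' Set.Icc (s i) (e i) ∧
    (∀ i < n, approx α ((e i : ℝ) : 𝕋) ((s ((i + 1) % n) : ℝ) : 𝕋))

/-- `L̃(x)`: the `h`-preimage of `x` in the interior of `C(L)` (for `x ≠ α`). -/
def tldL (α x : 𝕋) : 𝕋 :=
  if ((rep x / 2 : ℝ) : 𝕋) ∈ openArcL α then ((rep x / 2 : ℝ) : 𝕋)
  else ((rep x / 2 + 1 / 2 : ℝ) : 𝕋)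

/-- `R̃(x)`: the `h`-preimage of `x` in the interior of `C(R)` (for `x ≠ α`). -/
def tldR (α x : 𝕋) : 𝕋 :=
  if ((rep x / 2 : ℝ) : 𝕋) ∈ openArcR α then ((rep x / 2 : ℝ) : 𝕋)
  else ((rep x / 2 + 1 / 2 : ℝ) : 𝕋)

/-- The inverse branch associated with a single letter of `{L,R}`
(`true` codes `L`, `false` codes `R`). -/
def tldB (α : 𝕋) (b : Bool) (x : 𝕋) : 𝕋 := if b then tldL α x else tldR α x

/-- `g̃ = g̃[1] ∘ ⋯ ∘ g̃[n]` for a word `g ∈ {L,R}^*`. -/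
def wtld (α : 𝕋) (g : List Bool) (x : 𝕋) : 𝕋 := g.foldr (fun b y => tldB α b y) x

/-- The embedding `e(θ) = exp(2πiθ)` of the circle into `ℂ`. -/
def emb (x : 𝕋) : ℂ := Complex.exp (2 * Real.pi * Complex.I * (rep x))

/-- The chord of a pair of points of the circle: the closed Euclidean segment joining their
images in `ℂ`. -/
def chord (a b : 𝕋) : Set ℂ := segment ℝ (emb a) (emb b)

/-- The union of all chords `l_g` for words `g ∈ {L,R}^n`. -/
def chordsUnion (α : 𝕋) (n : ℕ) : Set ℂ :=
  ⋃ g ∈ {g : List Bool | g.length = n},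
    chord (wtld α g (star1 α)) (wtld α g (star2 α))

/-- The closed unit disk minus the chords of level `n`. -/
def diskMinus (α : 𝕋) (n : ℕ) : Set ℂ := Metric.closedBall (0 : ℂ) 1 \ chordsUnion α n

/-- `C` is a generalized cylinder set of degree `n`: the trace on the circle of the closure of
a connected component of the closed unit disk minus the chords of level `n`. -/
def IsGCS (α : 𝕋) (n : ℕ) (C : Set 𝕋) : Prop :=
  ∃ z ∈ diskMinus α n,
    C = {x : 𝕋 | emb x ∈ closure (connectedComponentIn (diskMinus α n) z)}

/-- The closed region of the circle associated with a letter (`⋆` imposes no restriction). -/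
def semi (α : 𝕋) : Letter → Set 𝕋
  | Letter.L => arcL α
  | Letter.R => arcR α
  | Letter.star => Set.univ

/-- `C(u)` for a word `u ∈ {L,R,⋆}^m`. -/
def cylSet (α : 𝕋) (u : List Letter) : Set 𝕋 :=
  {x : 𝕋 | ∀ i < u.length, dbl^[i] x ∈ semi α (u.getD i Letter.star)}

/-- The digit sequence of `I(α) = I^α(α)` (0-indexed: `ia α n` is the `(n+1)`-st digit). -/
def ia (α : 𝕋) (n : ℕ) : Letter := itin α α n

/-- A set `ℛ ⊆ ℕ` of indices is `D`-rare. -/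
def DRare (D : ℕ) (R : Finset ℕ) : Prop :=
  ∀ i : ℕ, (R.filter (fun j => i ≤ j ∧ j ≤ i + D)).card ≤ 3

/-- The `i`-th digit (1-based) of `I(α)[1..n]` is `(D,ℛ)`-duplicating. -/
def DupDigit (α : 𝕋) (D : ℕ) (R : Finset ℕ) (n i : ℕ) : Prop :=
  ∃ a b : ℕ, 1 ≤ a ∧ a ≤ i ∧ i ≤ b ∧ b ≤ n ∧
    (∀ j, a ≤ j → j ≤ b → j ∉ R → ia α (j - 1) = ia α (j - a)) ∧
    (b = n ∨ D < b - a + 1)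


/-- `α` is strongly recurrent. -/
def StronglyRecurrent (α : 𝕋) : Prop :=
  ∀ D : ℕ, 0 < D → ∀ τ : ℝ, τ < 1 →
    ∃ n : ℕ, D < n ∧ ∃ R : Finset ℕ, R ⊆ Finset.Icc 1 n ∧ DRare D R ∧
      τ * n < ((Finset.Icc 1 n).filter (fun i => DupDigit α D R n i)).card

/-- `α` is weakly pre-periodic with period `k`. -/
def WeaklyPrePeriodicWith (α : 𝕋) (k : ℕ) : Prop :=
  1 ≤ k ∧ ∃ m : ℕ, 1 ≤ m ∧ ∃ X : Letter, (X = Letter.L ∨ X = Letter.R) ∧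
    ∀ n : ℕ, ia α (m + k * n - 1) = X

/-- `α` is weakly pre-periodic (for some period). -/
def WeaklyPrePeriodic (α : 𝕋) : Prop := ∃ k : ℕ, WeaklyPrePeriodicWith α k

end

/-!
With `θ = rep α`, the point `h^j(α)` lies in the open arc `L` exactly when
`fract ((2^j - 1/2) θ) ∈ (0, 1/2)`, and in the open arc `R` exactly when it lies in `(1/2, 1)`.
So a weakly pre-periodic `α` has `θ` in a set `{t | ∀ n, fract (d n * t) ∈ I}` with `|I| = 1/2`
and `d n = 2^(m + k n) - 1/2 → ∞`. For large `d`, the points of an interval `J` with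
`fract (d t) ∈ I` form about `d |J|` intervals of length `|I| / d`, so such a set meets every
interval `J` in measure at most `|J| / 2`; by the Lebesgue density theorem it is null.
-/

open scoped ENNReal Topology

theorem measure_eq_zero_of_measure_inter_closedBall_le {β : Type*} [MetricSpace β]
    [MeasurableSpace β] [BorelSpace β] [SecondCountableTopology β] [HasBesicovitchCovering β]
    (μ : Measure β) [IsLocallyFiniteMeasure μ] (s : Set β) {c : ℝ≥0∞} (hc : c < 1)
    (h : ∀ x, ∀ᶠ r in 𝓝[>] 0, μ (s ∩ Metric.closedBall x r) ≤ c * μ (Metric.closedBall x r)) :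
    μ s = 0 := by
  by_contra hs
  have : (ae (μ.restrict s)).NeBot := ae_neBot.2 (by rwa [Ne, Measure.restrict_eq_zero])
  obtain ⟨x, hx⟩ := (Besicovitch.ae_tendsto_measure_inter_div μ s).exists
  exact hc.not_ge <| le_of_tendsto hx <| (h x).mono fun r hr => ENNReal.div_le_of_le_mul hr

theorem volume_Icc_inter_fract_mem_Ioo_le {c : ℝ} (hc : 0 < c) (y : ℝ) {ℓ : ℝ} (hℓ : 0 ≤ ℓ)
    {a b : ℝ} (hab : a ≤ b) :
    volume {t ∈ Icc a b | Int.fract (c * t) ∈ Ioo y (y + ℓ)} ≤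
      ENNReal.ofReal (ℓ * (b - a + 2 / c)) := by
  have hcover : {t ∈ Icc a b | Int.fract (c * t) ∈ Ioo y (y + ℓ)} ⊆
      ⋃ p ∈ Finset.Icc ⌊c * a⌋ ⌊c * b⌋, Ioo ((p + y) / c) ((p + y + ℓ) / c) := by
    rintro t ⟨⟨hta, htb⟩, hy, hyℓ⟩
    rw [← Int.self_sub_floor] at hy hyℓ
    refine mem_biUnion (x := ⌊c * t⌋) (Finset.mem_Icc.2 ⟨?_, ?_⟩) ⟨?_, ?_⟩
    · exact Int.floor_le_floor (mul_le_mul_of_nonneg_left hta hc.le)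
    · exact Int.floor_le_floor (mul_le_mul_of_nonneg_left htb hc.le)
    · rw [div_lt_iff₀ hc]; linarith
    · rw [lt_div_iff₀ hc]; linarith
  have hcard : ((Finset.Icc ⌊c * a⌋ ⌊c * b⌋).card : ℝ) ≤ c * (b - a) + 2 := by
    have hle : ⌊c * a⌋ ≤ ⌊c * b⌋ := Int.floor_le_floor (mul_le_mul_of_nonneg_left hab hc.le)
    rw [Int.card_Icc, ← Int.cast_natCast, Int.toNat_of_nonneg (by omega)]
    push_cast
    linarith [Int.floor_le (c * b), Int.lt_floor_add_one (c * a)]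
  calc _ ≤ ∑ p ∈ Finset.Icc ⌊c * a⌋ ⌊c * b⌋, volume (Ioo ((p + y) / c) ((p + y + ℓ) / c)) :=
        (measure_mono hcover).trans (measure_biUnion_finset_le _ _)
    _ = ENNReal.ofReal ((Finset.Icc ⌊c * a⌋ ⌊c * b⌋).card * (ℓ / c)) := by
        have hpiece : ∀ p : ℤ, (p + y + ℓ) / c - (p + y) / c = ℓ / c := fun p => by ring
        simp only [Real.volume_Ioo, hpiece, Finset.sum_const, nsmul_eq_mul]
        rw [ENNReal.ofReal_mul (by positivity), ENNReal.ofReal_natCast]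
    _ ≤ ENNReal.ofReal (ℓ * (b - a + 2 / c)) := by
        refine ENNReal.ofReal_le_ofReal ((mul_le_mul_of_nonneg_right hcard (by positivity)).trans
          (le_of_eq ?_))
        field_simp

theorem volume_setOf_forall_fract_mem_Ioo {d : ℕ → ℝ} (hd : Tendsto d atTop atTop) (y : ℝ)
    {ℓ : ℝ} (hℓ₀ : 0 ≤ ℓ) (hℓ₁ : ℓ < 1) :
    volume {t : ℝ | ∀ n, Int.fract (d n * t) ∈ Ioo y (y + ℓ)} = 0 := by
  set E := {t : ℝ | ∀ n, Int.fract (d n * t) ∈ Ioo y (y + ℓ)}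
  have hIcc : ∀ a b, a ≤ b → volume (E ∩ Icc a b) ≤ ENNReal.ofReal (ℓ * (b - a)) := by
    intro a b hab
    have hlim : Tendsto (fun n => ENNReal.ofReal (ℓ * (b - a + 2 / d n))) atTop
        (𝓝 (ENNReal.ofReal (ℓ * (b - a)))) := by
      simpa using ENNReal.tendsto_ofReal
        (((tendsto_const_nhds.div_atTop hd).const_add (b - a)).const_mul ℓ)
    refine ge_of_tendsto hlim ((hd.eventually_gt_atTop 0).mono fun n hn => ?_)
    refine (measure_mono fun t ht => ?_).trans (volume_Icc_inter_fract_mem_Ioo_le hn y hℓ₀ hab)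
    exact ⟨ht.2, ht.1 n⟩
  refine measure_eq_zero_of_measure_inter_closedBall_le volume E
    (ENNReal.ofReal_lt_one.2 hℓ₁) fun x => ?_
  filter_upwards [self_mem_nhdsWithin] with r (hr : 0 < r)
  rw [Real.closedBall_eq_Icc, Real.volume_Icc, ← ENNReal.ofReal_mul hℓ₀]
  exact hIcc _ _ (by linarith)

theorem rep_coe (t : ℝ) : rep (t : 𝕋) = Int.fract t := by
  simp [rep]

theorem coe_rep (x : 𝕋) : ((rep x : ℝ) : 𝕋) = x :=
  (AddCircle.equivIco 1 0).symm_apply_apply x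

theorem measurable_rep : Measurable rep :=
  measurable_subtype_coe.comp (AddCircle.measurableEquivIco 1 0).measurable

theorem volume_preimage_rep_eq_zero {E : Set ℝ} (hE : volume E = 0) :
    volume (rep ⁻¹' E) = 0 := by
  set F := toMeasurable volume E
  have hF : MeasurableSet (rep ⁻¹' F) := measurable_rep (measurableSet_toMeasurable _ _)
  refine measure_mono_null (preimage_mono (subset_toMeasurable volume E)) ?_
  rw [← (AddCircle.measurePreserving_mk 1 0).measure_preimage hF.nullMeasurableSet,
    zero_add, Measure.restrict_congr_set Ico_ae_eq_Ioc.symm,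
    Measure.restrict_apply' measurableSet_Ico]
  refine measure_mono_null (fun t ⟨htF, ht⟩ => ?_) (by rwa [measure_toMeasurable])
  rwa [mem_preimage, mem_preimage, rep_coe, Int.fract_eq_self.2 ht] at htF

theorem dbl_iterate_coe (j : ℕ) (t : ℝ) : dbl^[j] (t : 𝕋) = ((2 ^ j * t : ℝ) : 𝕋) := by
  induction j with
  | zero => simp
  | succ j ih =>
    rw [Function.iterate_succ_apply', ih, dbl, ← AddCircle.coe_add, pow_succ]
    ring_nf

theorem coe_mem_image_coe_add_iff {u v : ℝ} {I : Set ℝ} (hI : I ⊆ Ico 0 1) :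
    (u : 𝕋) ∈ (fun t : ℝ => ((v + t : ℝ) : 𝕋)) '' I ↔ Int.fract (u - v) ∈ I := by
  have hfract : ((Int.fract (u - v) : ℝ) : 𝕋) = u - v := by
    rw [AddCircle.coe_fract, AddCircle.coe_sub]
  constructor
  · rintro ⟨t, ht, htu : ((v + t : ℝ) : 𝕋) = u⟩
    have hsame : ((Int.fract (u - v) : ℝ) : 𝕋) = (t : 𝕋) := by
      rw [hfract, ← htu, AddCircle.coe_add, add_sub_cancel_left]
    have hfract_mem : Int.fract (u - v) ∈ Ico 0 (0 + 1) :=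
      ⟨Int.fract_nonneg _, by simpa using Int.fract_lt_one _⟩
    rwa [(AddCircle.coe_eq_coe_iff_of_mem_Ico hfract_mem (by simpa using hI ht)).1 hsame]
  · intro h
    exact ⟨_, h, show ((v + _ : ℝ) : 𝕋) = u by rw [AddCircle.coe_add, hfract, add_sub_cancel]⟩

theorem dbl_iterate_mem_image_iff (α x : 𝕋) (j : ℕ) {I : Set ℝ} (hI : I ⊆ Ico 0 1) :
    dbl^[j] x ∈ (fun t : ℝ => ((rep α / 2 + t : ℝ) : 𝕋)) '' I ↔
      Int.fract (2 ^ j * rep x - rep α / 2) ∈ I := by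
  rw [← coe_mem_image_coe_add_iff hI, ← dbl_iterate_coe, coe_rep]

theorem dbl_iterate_mem_openArcL_iff (α x : 𝕋) (j : ℕ) :
    dbl^[j] x ∈ openArcL α ↔ Int.fract (2 ^ j * rep x - rep α / 2) ∈ Ioo 0 (1 / 2) :=
  dbl_iterate_mem_image_iff α x j (Ioo_subset_Ico_self.trans (Ico_subset_Ico_right (by norm_num)))

theorem fract_mem_Ioo_of_itin_eq_L {α x : 𝕋} {j : ℕ} (h : itin α x j = Letter.L) :
    Int.fract (2 ^ j * rep x - rep α / 2) ∈ Ioo 0 (1 / 2) := by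
  unfold itin at h
  split_ifs at h with hstar hL
  exact (dbl_iterate_mem_openArcL_iff α x j).1 hL

theorem fract_mem_Ioo_of_itin_eq_R {α x : 𝕋} {j : ℕ} (h : itin α x j = Letter.R) :
    Int.fract (2 ^ j * rep x - rep α / 2) ∈ Ioo (1 / 2) 1 := by
  unfold itin at h
  split_ifs at h with hstar hL
  have h₀ : Int.fract (2 ^ j * rep x - rep α / 2) ≠ 0 := fun h₀ => hstar (Or.inl <| by
    simpa [star1] using (dbl_iterate_mem_image_iff α x j (I := {0}) (by simp)).2 h₀)
  have h₁ : Int.fract (2 ^ j * rep x - rep α / 2) ≠ 1 / 2 := fun h₁ => hstar (Or.inr <| by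
    simpa [star2] using (dbl_iterate_mem_image_iff α x j (I := {1 / 2})
      (by norm_num [Set.singleton_subset_iff])).2 h₁)
  have h₂ : Int.fract (2 ^ j * rep x - rep α / 2) ∉ Ioo 0 (1 / 2) := fun h₂ =>
    hL ((dbl_iterate_mem_openArcL_iff α x j).2 h₂)
  have hnonneg := Int.fract_nonneg (2 ^ j * rep x - rep α / 2)
  have hlt := Int.fract_lt_one (2 ^ j * rep x - rep α / 2)
  simp only [mem_Ioo, not_and_or, not_lt] at h₂
  rcases h₂ with h₂ | h₂
  · exact absurd (le_antisymm h₂ hnonneg) h₀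
  · exact ⟨lt_of_le_of_ne h₂ (Ne.symm h₁), hlt⟩

theorem WeaklyPrePeriodicWith.exists_fract_mem_Ioo {α : 𝕋} {k : ℕ}
    (h : WeaklyPrePeriodicWith α k) :
    ∃ m : ℕ, ∃ y ∈ ({0, 1 / 2} : Set ℝ),
      ∀ n, Int.fract ((2 ^ (m + k * n) - 1 / 2) * rep α) ∈ Ioo y (y + 1 / 2) := by
  obtain ⟨-, m, hm, X, hX, hX_at⟩ := h
  have hrw : ∀ n, (2 ^ (m - 1 + k * n) - 1 / 2) * rep α =
      2 ^ (m + k * n - 1) * rep α - rep α / 2 := fun n => by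
    rw [show m + k * n - 1 = m - 1 + k * n by omega]
    ring
  refine ⟨m - 1, ?_⟩
  rcases hX with rfl | rfl
  · refine ⟨0, by simp, fun n => ?_⟩
    rw [hrw, zero_add]
    exact fract_mem_Ioo_of_itin_eq_L (hX_at n)
  · refine ⟨1 / 2, by simp, fun n => ?_⟩
    rw [hrw, add_halves]
    exact fract_mem_Ioo_of_itin_eq_R (hX_at n)

/-- the set of weakly pre-periodic angles has Haar (Lebesgue) measure zero. -/
theorem stmt_3 : volume {α : 𝕋 | WeaklyPrePeriodic α} = 0 := by
  have hcover : {α : 𝕋 | WeaklyPrePeriodic α} ⊆ ⋃ k ≥ 1, ⋃ m : ℕ, ⋃ y ∈ ({0, 1 / 2} : Set ℝ),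
      rep ⁻¹' {t | ∀ n, Int.fract ((2 ^ (m + k * n) - 1 / 2) * t) ∈ Ioo y (y + 1 / 2)} := by
    rintro α ⟨k, hk⟩
    obtain ⟨m, y, hy, hfract⟩ := hk.exists_fract_mem_Ioo
    simp only [mem_iUnion]
    exact ⟨k, hk.1, m, y, hy, hfract⟩
  refine measure_mono_null hcover ?_
  simp only [measure_iUnion_null_iff, measure_biUnion_null_iff (toFinite _).countable]
  intro k hk m y _
  have hexp : Tendsto (fun n : ℕ => m + k * n) atTop atTop :=
    tendsto_atTop_mono (fun n => le_add_left (Nat.le_mul_of_pos_left n hk)) tendsto_id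
  have hd : Tendsto (fun n : ℕ => (2 : ℝ) ^ (m + k * n) - 1 / 2) atTop atTop :=
    tendsto_atTop_add_const_right _ _ ((tendsto_pow_atTop_atTop_of_one_lt one_lt_two).comp hexp)
  exact volume_preimage_rep_eq_zero
    (volume_setOf_forall_fract_mem_Ioo hd y (by norm_num) (by norm_num))
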